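/- arXiv:1803.03614 — 5 statements merged into one kernel-verified Lean document; each statement's English description precedes it below -/
import Mathlib

section
/- With the letter distribution P̄(a) = (1/|C|) · Σ_{x ∈ C} n_a(x)/n, where n_a(x) counts occurrences of a in x, the divergence of the uniform distribution on codebook C from P_A^n decomposes as D(P̃ ‖ P_A^n) = -log₂|C| + n·H(P̄) + n·D(P̄ ‖ P_A). -/
/-- With the letter distribution `P̄(a) = (1/|C|) Σ_{x∈C} n_a(x)/n`,
the divergence of the uniform distribution on `C` from `P^n` decomposes as
`D = -log₂|C| + n·H(P̄) + n·D(P̄‖P)`. -/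
theorem stmt_1 {A : Type*} [Fintype A] [DecidableEq A] {n : ℕ} (hn : 0 < n)
    (P : A → ℝ) (hpos : ∀ a, 0 < P a) (hsum : ∑ a, P a = 1)
    (C : Finset (Fin n → A)) (hC : C.Nonempty)
    (Pbar : A → ℝ)
    (hPbar : ∀ a, Pbar a =
      (1 / (C.card : ℝ)) * ∑ x ∈ C,
        ((Finset.univ.filter (fun i => x i = a)).card : ℝ) / n) :
    ∑ x ∈ C, (1 / (C.card : ℝ)) * Real.logb 2 ((1 / (C.card : ℝ)) / ∏ i, P (x i))
      = - Real.logb 2 (C.card : ℝ)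
        + n * (∑ a, - Pbar a * Real.logb 2 (Pbar a))
        + n * (∑ a, Pbar a * Real.logb 2 (Pbar a / P a)) := by
  have hc : (0:ℝ) < (C.card : ℝ) := by exact_mod_cast Finset.card_pos.mpr hC
  have hn' : (0:ℝ) < (n : ℝ) := by exact_mod_cast hn
  have hPbar0 : ∀ a, 0 ≤ Pbar a := by
    intro a; rw [hPbar a]; positivity
  -- combine entropy and divergence sums
  have hRHS : (∑ a, - Pbar a * Real.logb 2 (Pbar a))
      + (∑ a, Pbar a * Real.logb 2 (Pbar a / P a))
      = ∑ a, - (Pbar a * Real.logb 2 (P a)) := by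
    rw [← Finset.sum_add_distrib]
    refine Finset.sum_congr rfl fun a _ => ?_
    rcases eq_or_lt_of_le (hPbar0 a) with h | h
    · simp [← h]
    · rw [Real.logb_div (ne_of_gt h) (ne_of_gt (hpos a))]; ring
  -- letter counts
  have hcount : ∀ a, (n:ℝ) * Pbar a
      = (1/(C.card:ℝ)) * ∑ x ∈ C,
          ((Finset.univ.filter (fun i => x i = a)).card : ℝ) := by
    intro a
    rw [hPbar a, ← Finset.sum_div]
    rw [mul_left_comm, mul_div_cancel₀ _ (ne_of_gt hn')]
  -- inner sum rewrite
  have hinner : ∀ x : Fin n → A, (∑ i, Real.logb 2 (P (x i)))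
      = ∑ a, ((Finset.univ.filter (fun i => x i = a)).card : ℝ) * Real.logb 2 (P a) := by
    intro x
    rw [← Finset.sum_fiberwise Finset.univ (fun i => x i) (fun i => Real.logb 2 (P (x i)))]
    refine Finset.sum_congr rfl fun a _ => ?_
    rw [Finset.sum_congr rfl (fun i hi => by
      rw [(Finset.mem_filter.mp hi).2])]
    rw [Finset.sum_const, nsmul_eq_mul]
  -- rewrite LHS
  have hLHS : ∑ x ∈ C, (1 / (C.card : ℝ)) * Real.logb 2 ((1 / (C.card : ℝ)) / ∏ i, P (x i))
      = - Real.logb 2 (C.card : ℝ)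
        - (1/(C.card:ℝ)) * ∑ a, (∑ x ∈ C,
            ((Finset.univ.filter (fun i => x i = a)).card : ℝ)) * Real.logb 2 (P a) := by
    have hprod : ∀ x : Fin n → A, (0:ℝ) < ∏ i, P (x i) := by
      intro x; exact Finset.prod_pos fun i _ => hpos (x i)
    have step : ∀ x ∈ C, (1 / (C.card : ℝ)) * Real.logb 2 ((1 / (C.card : ℝ)) / ∏ i, P (x i))
        = (1/(C.card:ℝ)) * (- Real.logb 2 (C.card : ℝ))
          - (1/(C.card:ℝ)) * ∑ a, ((Finset.univ.filter (fun i => x i = a)).card : ℝ) * Real.logb 2 (P a) := by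
      intro x _
      rw [Real.logb_div (by positivity) (ne_of_gt (hprod x)), one_div, Real.logb_inv,
        Real.logb_prod _ _ (fun i _ => ne_of_gt (hpos (x i))), hinner x]
      ring
    rw [Finset.sum_congr rfl step, Finset.sum_sub_distrib, Finset.sum_const,
      nsmul_eq_mul]
    congr 1
    · have hcne : (C.card:ℝ) ≠ 0 := ne_of_gt hc
      field_simp
    · rw [← Finset.mul_sum]
      congr 1
      rw [Finset.sum_comm]
      exact Finset.sum_congr rfl fun a _ => by rw [Finset.sum_mul]
  rw [hLHS, add_assoc, ← mul_add, hRHS]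
  have key : (n:ℝ) * ∑ a, -(Pbar a * Real.logb 2 (P a))
      = -((1/(C.card:ℝ)) * ∑ a, (∑ x ∈ C,
          ((Finset.univ.filter (fun i => x i = a)).card : ℝ)) * Real.logb 2 (P a)) := by
    rw [Finset.mul_sum, Finset.mul_sum, ← Finset.sum_neg_distrib]
    exact Finset.sum_congr rfl fun a _ => by
      rw [mul_neg, ← mul_assoc, hcount a, mul_assoc]
  rw [key, ← sub_eq_add_neg]
end

section
/- A codebook consisting of M sequences of least total self-information (i.e., any set C of cardinality M such that every x ∈ C and y ∉ C satisfy Σᵢ(-log₂ P_A(xᵢ)) ≤ Σᵢ(-log₂ P_A(yᵢ))) minimizes D(P̃_C ‖ P_A^n) over all codebooks of cardinality M. -/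
open Finset

/-- A codebook of `M` sequences of least total self-information
minimizes `D(P̃_C ‖ P^n)` over all codebooks of cardinality `M`. -/
theorem stmt_3 {A : Type*} [Fintype A] {n M : ℕ} (hM : 0 < M)
    (P : A → ℝ) (hpos : ∀ a, 0 < P a) (hsum : ∑ a, P a = 1)
    (C : Finset (Fin n → A)) (hCcard : C.card = M)
    (hleast : ∀ x ∈ C, ∀ y : Fin n → A, y ∉ C →
      ∑ i, (- Real.logb 2 (P (x i))) ≤ ∑ i, (- Real.logb 2 (P (y i)))) :
    ∀ C' : Finset (Fin n → A), C'.card = M →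
      ∑ x ∈ C, (1 / (C.card : ℝ)) *
          Real.logb 2 ((1 / (C.card : ℝ)) / ∏ i, P (x i))
        ≤ ∑ x ∈ C', (1 / (C'.card : ℝ)) *
            Real.logb 2 ((1 / (C'.card : ℝ)) / ∏ i, P (x i)) := by
  intro C' hC'card
  classical
  have hMpos : (0:ℝ) < M := by exact_mod_cast hM
  set f : (Fin n → A) → ℝ := fun x => ∑ i, (- Real.logb 2 (P (x i))) with hf
  -- key combinatorial inequality
  have hcard : C.card = C'.card := by rw [hCcard, hC'card]
  have hkey : ∑ x ∈ C, f x ≤ ∑ x ∈ C', f x := by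
    have hsd : (C \ C').card = (C' \ C).card := by
      have h1 : (C \ C').card + (C ∩ C').card = C.card :=
        Finset.card_sdiff_add_card_inter C C'
      have h2 : (C' \ C).card + (C' ∩ C).card = C'.card :=
        Finset.card_sdiff_add_card_inter C' C
      rw [Finset.inter_comm] at h2
      omega
    have hdecC : ∑ x ∈ C ∩ C', f x + ∑ x ∈ C \ C', f x = ∑ x ∈ C, f x :=
      Finset.sum_inter_add_sum_sdiff C C' f
    have hdecC' : ∑ x ∈ C ∩ C', f x + ∑ x ∈ C' \ C, f x = ∑ x ∈ C', f x := by
      rw [Finset.inter_comm]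
      exact Finset.sum_inter_add_sum_sdiff C' C f
    rcases (C' \ C).eq_empty_or_nonempty with he | hne
    · have he' : C \ C' = ∅ := Finset.card_eq_zero.mp (by rw [hsd, he]; simp)
      rw [← hdecC, ← hdecC', he, he']
    · obtain ⟨y₀, hy₀, hmin⟩ := Finset.exists_min_image (C' \ C) f hne
      have hy₀C : y₀ ∉ C := (Finset.mem_sdiff.mp hy₀).2
      have h1 : ∑ x ∈ C \ C', f x ≤ (C \ C').card • f y₀ :=
        Finset.sum_le_card_nsmul _ _ _ (fun x hx =>
          hleast x (Finset.mem_sdiff.mp hx).1 y₀ hy₀C)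
      have h2 : (C' \ C).card • f y₀ ≤ ∑ x ∈ C' \ C, f x :=
        Finset.card_nsmul_le_sum _ _ _ (fun y hy => hmin y hy)
      rw [hsd] at h1
      linarith
  -- rewrite each side
  have hterm : ∀ (D : Finset (Fin n → A)), D.card = M →
      ∑ x ∈ D, (1 / (D.card : ℝ)) * Real.logb 2 ((1 / (D.card : ℝ)) / ∏ i, P (x i))
        = Real.logb 2 (1 / (M:ℝ)) + (1 / (M:ℝ)) * ∑ x ∈ D, f x := by
    intro D hD
    have hstep : ∀ x : Fin n → A,
        Real.logb 2 ((1 / (M:ℝ)) / ∏ i, P (x i))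
          = Real.logb 2 (1 / (M:ℝ)) + f x := by
      intro x
      have hp : ∀ i ∈ (Finset.univ : Finset (Fin n)), P (x i) ≠ 0 :=
        fun i _ => (hpos _).ne'
      rw [Real.logb_div (one_div_pos.mpr hMpos).ne' (Finset.prod_pos (fun i _ => hpos _)).ne',
        Real.logb_prod _ _ hp, hf, sub_eq_add_neg, ← Finset.sum_neg_distrib]
    rw [hD]
    calc ∑ x ∈ D, (1 / (M:ℝ)) * Real.logb 2 ((1 / (M:ℝ)) / ∏ i, P (x i))
        = ∑ x ∈ D, (1 / (M:ℝ)) * (Real.logb 2 (1 / (M:ℝ)) + f x) :=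
          Finset.sum_congr rfl (fun x _ => by rw [hstep x])
      _ = (1 / (M:ℝ)) * ((D.card : ℝ) * Real.logb 2 (1 / (M:ℝ)) + ∑ x ∈ D, f x) := by
          rw [← Finset.mul_sum, Finset.sum_add_distrib, Finset.sum_const,
            nsmul_eq_mul]
      _ = Real.logb 2 (1 / (M:ℝ)) + (1 / (M:ℝ)) * ∑ x ∈ D, f x := by
          rw [hD]; field_simp
  rw [hterm C hCcard, hterm C' hC'card]
  exact (add_le_add_iff_left _).mpr (mul_le_mul_of_nonneg_left hkey (by positivity))
end

section
/- For the half Maxwell–Boltzmann distribution P_A(a) = e^{-v a²}/Σ_{ξ∈A} e^{-v ξ²} on A = {1,3,...,2η-1} with v > 0, a codebook C of cardinality M minimizes D(P̃_C ‖ P_A^n) among M-element codebooks if and only if C minimizes the total energy Σ_{x∈C} Σᵢ xᵢ², i.e., energy-minimal codebooks are exactly the divergence-minimal codebooks. -/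
/-- For the half Maxwell–Boltzmann pmf on `{1,3,…,2η-1}` (modeled by
`Fin η` with letter value `2i+1`), an `M`-element codebook minimizes the
divergence `D(P̃_C ‖ P^n)` iff it minimizes the total energy `Σ_{x∈C} Σᵢ xᵢ²`. -/
theorem stmt_8 {η : ℕ} (hη : 0 < η) {n M : ℕ} (hM : 0 < M) (hMle : M ≤ η ^ n)
    (v : ℝ) (hv : 0 < v)
    (val : Fin η → ℕ) (hval : ∀ i, val i = 2 * (i : ℕ) + 1)
    (P : Fin η → ℝ)
    (hP : ∀ i, P i = Real.exp (-(v * (val i : ℝ) ^ 2))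
        / ∑ ξ, Real.exp (-(v * (val ξ : ℝ) ^ 2)))
    (C : Finset (Fin n → Fin η)) (hCcard : C.card = M) :
    (∀ C' : Finset (Fin n → Fin η), C'.card = M →
        ∑ x ∈ C, (1 / (C.card : ℝ)) *
            Real.logb 2 ((1 / (C.card : ℝ)) / ∏ i, P (x i))
          ≤ ∑ x ∈ C', (1 / (C'.card : ℝ)) *
              Real.logb 2 ((1 / (C'.card : ℝ)) / ∏ i, P (x i)))
    ↔ (∀ C' : Finset (Fin n → Fin η), C'.card = M →
        ∑ x ∈ C, ∑ i, ((val (x i) : ℝ) ^ 2)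
          ≤ ∑ x ∈ C', ∑ i, ((val (x i) : ℝ) ^ 2)) := by
  set Z : ℝ := ∑ ξ, Real.exp (-(v * (val ξ : ℝ) ^ 2)) with hZdef
  have hZ : 0 < Z := by
    apply Finset.sum_pos (fun i _ => Real.exp_pos _)
    have : Nonempty (Fin η) := ⟨⟨0, hη⟩⟩
    exact Finset.univ_nonempty
  have hMpos : (0 : ℝ) < M := by exact_mod_cast hM
  have hprod : ∀ x : Fin n → Fin η,
      ∏ i, P (x i) = Real.exp (-(v * ∑ i, ((val (x i) : ℝ) ^ 2))) / Z ^ n := by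
    intro x
    simp only [hP]
    rw [Finset.prod_div_distrib, Finset.prod_const, Finset.card_univ, Fintype.card_fin,
      ← Real.exp_sum]
    congr 1
    rw [Finset.mul_sum]
    simp [neg_add]
  have key : ∀ (D : Finset (Fin n → Fin η)), D.card = M →
      ∑ x ∈ D, (1 / (D.card : ℝ)) * Real.logb 2 ((1 / (D.card : ℝ)) / ∏ i, P (x i))
      = Real.logb 2 (Z ^ n / M)
        + (v / Real.log 2 / M) * ∑ x ∈ D, ∑ i, ((val (x i) : ℝ) ^ 2) := by
    intro D hD
    have hterm : ∀ x : Fin n → Fin η,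
        Real.logb 2 ((1 / (M : ℝ)) / ∏ i, P (x i))
        = Real.logb 2 (Z ^ n / M)
          + (v / Real.log 2) * ∑ i, ((val (x i) : ℝ) ^ 2) := by
      intro x
      rw [hprod x]
      have h1 : (1 / (M : ℝ)) / (Real.exp (-(v * ∑ i, ((val (x i) : ℝ) ^ 2))) / Z ^ n)
          = (Z ^ n / M) * Real.exp (v * ∑ i, ((val (x i) : ℝ) ^ 2)) := by
        rw [Real.exp_neg]
        field_simp
      rw [h1, Real.logb_mul (by positivity) (Real.exp_ne_zero _)]
      simp only [Real.logb, Real.log_exp]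
      ring
    rw [hD]
    calc ∑ x ∈ D, (1 / (M : ℝ)) * Real.logb 2 ((1 / (M : ℝ)) / ∏ i, P (x i))
        = ∑ x ∈ D, ((1 / (M : ℝ)) * Real.logb 2 (Z ^ n / M)
            + (v / Real.log 2 / M) * ∑ i, ((val (x i) : ℝ) ^ 2)) := by
          refine Finset.sum_congr rfl fun x _ => ?_
          rw [hterm x]; field_simp
      _ = (D.card : ℝ) * ((1 / (M : ℝ)) * Real.logb 2 (Z ^ n / M))
            + (v / Real.log 2 / M) * ∑ x ∈ D, ∑ i, ((val (x i) : ℝ) ^ 2) := by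
          rw [Finset.sum_add_distrib, Finset.sum_const, nsmul_eq_mul, ← Finset.mul_sum]
      _ = Real.logb 2 (Z ^ n / M)
            + (v / Real.log 2 / M) * ∑ x ∈ D, ∑ i, ((val (x i) : ℝ) ^ 2) := by
          rw [hD]; field_simp
  have hc : 0 < v / Real.log 2 / M := by
    have : 0 < Real.log 2 := Real.log_pos (by norm_num)
    positivity
  constructor
  · intro h C' hC'
    have := h C' hC'
    rw [key C hCcard, key C' hC'] at this
    have := (add_le_add_iff_left _).mp this
    exact (mul_le_mul_iff_right₀ hc).mp this
  · intro h C' hC'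
    rw [key C hCcard, key C' hC']
    exact add_le_add_right ((mul_le_mul_iff_right₀ hc).mpr (h C' hC')) _
end

section
/- Among subsets C ⊆ A^n with |C| = M, the minimum achievable divergence D(P̃_C ‖ P_A^n) equals -log₂ M plus (1/M) times the sum of the M smallest values of the sequence self-information x ↦ Σᵢ(-log₂ P_A(xᵢ)) over A^n. -/
lemma aux_sum_le {α : Type*} [DecidableEq α] (f : α → ℝ) (s t : Finset α)
    (h : s.card = t.card) (hle : ∀ x ∈ s, ∀ y ∈ t, f x ≤ f y) :
    ∑ x ∈ s, f x ≤ ∑ y ∈ t, f y := by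
  let e := s.equivOfCardEq h
  calc ∑ x ∈ s, f x = ∑ x : s, f x := (Finset.sum_coe_sort s f).symm
    _ ≤ ∑ x : s, f (e x) := by
        apply Finset.sum_le_sum
        intro x _
        exact hle x x.2 (e x) (e x).2
    _ = ∑ y : t, f y := Equiv.sum_comp e fun y => f y
    _ = ∑ y ∈ t, f y := Finset.sum_coe_sort t f

lemma aux_compute {A : Type*} [Fintype A] {n M : ℕ} (hM : 0 < M)
    (P : A → ℝ) (hpos : ∀ a, 0 < P a)
    (C : Finset (Fin n → A)) (hC : C.card = M) :
    ∑ x ∈ C, (1 / (C.card : ℝ)) *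
        Real.logb 2 ((1 / (C.card : ℝ)) / ∏ i, P (x i))
      = - Real.logb 2 (M : ℝ)
        + (1 / (M : ℝ)) * ∑ x ∈ C, ∑ i, (- Real.logb 2 (P (x i))) := by
  have hM0 : (M : ℝ) ≠ 0 := Nat.cast_ne_zero.mpr hM.ne'
  have key : ∀ x : Fin n → A,
      Real.logb 2 ((1 / (M : ℝ)) / ∏ i, P (x i))
        = - Real.logb 2 (M : ℝ) + ∑ i, (- Real.logb 2 (P (x i))) := by
    intro x
    have hprod : (0 : ℝ) < ∏ i, P (x i) := Finset.prod_pos fun i _ => hpos (x i)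
    rw [Real.logb_div (by positivity) hprod.ne', one_div, Real.logb_inv,
        Real.logb_prod _ _ (fun i _ => (hpos (x i)).ne')]
    simp only [Finset.sum_neg_distrib]
    ring
  rw [hC]
  calc ∑ x ∈ C, (1 / (M : ℝ)) * Real.logb 2 ((1 / (M : ℝ)) / ∏ i, P (x i))
      = ∑ x ∈ C, ((1 / (M : ℝ)) * (- Real.logb 2 (M : ℝ))
          + (1 / (M : ℝ)) * ∑ i, (- Real.logb 2 (P (x i)))) := by
        apply Finset.sum_congr rfl
        intro x _
        rw [key x]; ring
    _ = - Real.logb 2 (M : ℝ)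
        + (1 / (M : ℝ)) * ∑ x ∈ C, ∑ i, (- Real.logb 2 (P (x i))) := by
        rw [Finset.sum_add_distrib, Finset.sum_const, ← Finset.mul_sum, hC]
        field_simp
        linear_combination (-((M : ℝ) * Real.logb 2 (M : ℝ))) * mul_inv_cancel₀ hM0

/-- The minimum achievable divergence among `M`-element codebooks
equals `-log₂ M + (1/M)·(sum of the M smallest sequence self-informations)`,
the latter realized by any `M`-set `C₀` on which the self-information is least. -/
theorem stmt_14 {A : Type*} [Fintype A] {n M : ℕ} (hM : 0 < M)
    (hMle : M ≤ Fintype.card A ^ n)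
    (P : A → ℝ) (hpos : ∀ a, 0 < P a) (hsum : ∑ a, P a = 1)
    (C₀ : Finset (Fin n → A)) (hC₀card : C₀.card = M)
    (hleast : ∀ x ∈ C₀, ∀ y : Fin n → A, y ∉ C₀ →
      ∑ i, (- Real.logb 2 (P (x i))) ≤ ∑ i, (- Real.logb 2 (P (y i)))) :
    IsLeast
      {d : ℝ | ∃ C : Finset (Fin n → A), C.card = M ∧
        d = ∑ x ∈ C, (1 / (C.card : ℝ)) *
              Real.logb 2 ((1 / (C.card : ℝ)) / ∏ i, P (x i))}
      (- Real.logb 2 (M : ℝ)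
        + (1 / (M : ℝ)) * ∑ x ∈ C₀, ∑ i, (- Real.logb 2 (P (x i)))) := by
  classical
  constructor
  · exact ⟨C₀, hC₀card, (aux_compute hM P hpos C₀ hC₀card).symm⟩
  · rintro d ⟨C, hC, rfl⟩
    rw [aux_compute hM P hpos C hC]
    have hMpos : (0 : ℝ) < M := Nat.cast_pos.mpr hM
    set f : (Fin n → A) → ℝ := fun x => ∑ i, (- Real.logb 2 (P (x i))) with hf
    have hss : ∑ x ∈ C₀, f x ≤ ∑ x ∈ C, f x := by
      have hsplit₀ : ∑ x ∈ C₀, f x = ∑ x ∈ C₀ ∩ C, f x + ∑ x ∈ C₀ \ C, f x := by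
        rw [Finset.sum_inter_add_sum_sdiff]
      have hsplit : ∑ x ∈ C, f x = ∑ x ∈ C₀ ∩ C, f x + ∑ x ∈ C \ C₀, f x := by
        rw [Finset.inter_comm, Finset.sum_inter_add_sum_sdiff]
      rw [hsplit₀, hsplit]
      have hle2 : ∑ x ∈ C₀ \ C, f x ≤ ∑ x ∈ C \ C₀, f x := by
        apply aux_sum_le
        · have h1 := Finset.card_inter_add_card_sdiff C₀ C
          have h2 := Finset.card_inter_add_card_sdiff C C₀
          rw [Finset.inter_comm C C₀] at h2
          omega
        · intro x hx y hy
          exact hleast x (Finset.mem_sdiff.mp hx).1 y (Finset.mem_sdiff.mp hy).2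
      linarith
    have := mul_le_mul_of_nonneg_left hss (by positivity : (0:ℝ) ≤ 1 / (M:ℝ))
    linarith
end

section
/- For the half MB distribution on A = {1,3,...,2η-1}, the divergence-optimal codebook of cardinality M is independent of the parameter v > 0: the set of M-element subsets C minimizing D(P̃_C ‖ P_v^n) is the same for all v > 0, namely the sets of M sequences of least energy Σᵢ xᵢ². -/
lemma stmt_16_key {η : ℕ} (hη : 0 < η) {n M : ℕ} (hM : 0 < M)
    (val : Fin η → ℕ) (v : ℝ)
    (C' : Finset (Fin n → Fin η)) (hc : C'.card = M) :
    ∑ x ∈ C', (1 / (C'.card : ℝ)) *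
        Real.logb 2 ((1 / (C'.card : ℝ)) /
          ∏ i, (Real.exp (-(v * (val (x i) : ℝ) ^ 2)) /
            ∑ ξ, Real.exp (-(v * (val ξ : ℝ) ^ 2))))
      = (Real.log (1 / (M : ℝ)) + (n : ℝ) *
            Real.log (∑ ξ, Real.exp (-(v * (val ξ : ℝ) ^ 2)))) / Real.log 2
        + (v / ((M : ℝ) * Real.log 2)) * ∑ x ∈ C', ∑ i, ((val (x i) : ℝ) ^ 2) := by
  have : Nonempty (Fin η) := ⟨⟨0, hη⟩⟩
  set Z : ℝ := ∑ ξ, Real.exp (-(v * (val ξ : ℝ) ^ 2)) with hZdef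
  have hZ : 0 < Z := Finset.sum_pos (fun _ _ => Real.exp_pos _) Finset.univ_nonempty
  have hM0 : (M : ℝ) ≠ 0 := Nat.cast_ne_zero.mpr hM.ne'
  have hlog2 : Real.log 2 ≠ 0 := ne_of_gt (Real.log_pos one_lt_two)
  have hx : ∀ x ∈ C', (1 / (C'.card : ℝ)) *
        Real.logb 2 ((1 / (C'.card : ℝ)) /
          ∏ i, (Real.exp (-(v * (val (x i) : ℝ) ^ 2)) / Z))
      = (1 / (M : ℝ)) * ((Real.log (1 / (M : ℝ)) + (n : ℝ) * Real.log Z) / Real.log 2)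
        + (v / ((M : ℝ) * Real.log 2)) * ∑ i, ((val (x i) : ℝ) ^ 2) := by
    intro x _
    have hprod : ∏ i, (Real.exp (-(v * (val (x i) : ℝ) ^ 2)) / Z)
        = Real.exp (-(v * ∑ i, ((val (x i) : ℝ) ^ 2))) / Z ^ n := by
      rw [Finset.prod_div_distrib, ← Real.exp_sum, Finset.prod_const, Finset.card_univ,
        Fintype.card_fin]
      congr 1
      rw [Finset.mul_sum, ← Finset.sum_neg_distrib]
    rw [hc, hprod, Real.logb, Real.log_div (one_div_ne_zero hM0)
      (div_ne_zero (Real.exp_ne_zero _) (pow_ne_zero _ hZ.ne')),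
      Real.log_div (Real.exp_ne_zero _) (pow_ne_zero _ hZ.ne'), Real.log_exp,
      Real.log_pow]
    field_simp
    ring
  rw [Finset.sum_congr rfl hx, Finset.sum_add_distrib, Finset.sum_const, hc,
    ← Finset.mul_sum, nsmul_eq_mul]
  have : (M : ℝ) * ((1 / (M : ℝ)) * ((Real.log (1 / (M : ℝ)) + (n : ℝ) * Real.log Z)
      / Real.log 2)) = (Real.log (1 / (M : ℝ)) + (n : ℝ) * Real.log Z) / Real.log 2 := by
    field_simp
  rw [this]

/-- For the half MB family `P_v` on `{1,3,…,2η-1}` (modeled by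
`Fin η` with letter value `2i+1`), the divergence-optimal `M`-element codebooks
are the same for every `v > 0`, namely exactly the `M`-element sets of least
total energy `Σ_{x∈C} Σᵢ xᵢ²`. -/
theorem stmt_16 {η : ℕ} (hη : 0 < η) {n M : ℕ} (hM : 0 < M) (hMle : M ≤ η ^ n)
    (val : Fin η → ℕ) (hval : ∀ i, val i = 2 * (i : ℕ) + 1)
    (C : Finset (Fin n → Fin η)) (hCcard : C.card = M) :
    ∀ v : ℝ, 0 < v →
      ((∀ C' : Finset (Fin n → Fin η), C'.card = M →
          ∑ x ∈ C, (1 / (C.card : ℝ)) *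
              Real.logb 2 ((1 / (C.card : ℝ)) /
                ∏ i, (Real.exp (-(v * (val (x i) : ℝ) ^ 2)) /
                  ∑ ξ, Real.exp (-(v * (val ξ : ℝ) ^ 2))))
            ≤ ∑ x ∈ C', (1 / (C'.card : ℝ)) *
                Real.logb 2 ((1 / (C'.card : ℝ)) /
                  ∏ i, (Real.exp (-(v * (val (x i) : ℝ) ^ 2)) /
                    ∑ ξ, Real.exp (-(v * (val ξ : ℝ) ^ 2)))))
        ↔ (∀ C' : Finset (Fin n → Fin η), C'.card = M →
            ∑ x ∈ C, ∑ i, ((val (x i) : ℝ) ^ 2)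
              ≤ ∑ x ∈ C', ∑ i, ((val (x i) : ℝ) ^ 2))) := by
  intro v hv
  have hc : 0 < v / ((M : ℝ) * Real.log 2) :=
    div_pos hv (mul_pos (by exact_mod_cast hM) (Real.log_pos one_lt_two))
  constructor
  · intro h C' hC'
    have h2 := h C' hC'
    rw [stmt_16_key hη hM val v C hCcard, stmt_16_key hη hM val v C' hC'] at h2
    have h3 := le_of_add_le_add_left h2
    exact le_of_mul_le_mul_left h3 hc
  · intro h C' hC'
    have h2 := h C' hC'
    rw [stmt_16_key hη hM val v C hCcard, stmt_16_key hη hM val v C' hC']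
    have := mul_le_mul_of_nonneg_left h2 hc.le
    linarith
end
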